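/- arXiv:1605.02508 — 7 statements merged into one kernel-verified Lean document; each statement's English description precedes it below -/
import Mathlib

section
/- Let $x_1 \le x_2 \le \cdots \le x_n$ be positive real numbers with $n \ge 2$, and set $b_1 = \sum_i x_i$ and $b_2 = \sum_{i<j} x_i x_j$. Then $b_1 - 2 b_2 / b_1 \le x_n < (b_1^2 - 2 b_2)^{1/2}$. -/
open Finset

/-! Both bounds come from Newton's identity `b₁² - 2 b₂ = ∑ xᵢ²`: this sum is at most `xₙ b₁`
since every `xᵢ ≤ xₙ`, and it exceeds `xₙ²` because `x₁²` is another positive term. -/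

theorem Finset.sq_sum_eq_sum_sq_add_two_mul_sum_lt {ι R : Type*} [LinearOrder ι] [CommSemiring R]
    (s : Finset ι) (x : ι → R) :
    (∑ i ∈ s, x i) ^ 2 =
      ∑ i ∈ s, x i ^ 2 + 2 * ∑ i ∈ s, ∑ j ∈ s, if i < j then x i * x j else 0 := by
  have split (i j : ι) : x i * x j = (if i = j then x i ^ 2 else 0) +
      (if i < j then x i * x j else 0) + (if j < i then x j * x i else 0) := by
    rcases lt_trichotomy i j with h | rfl | h
    · simp [h, h.ne, h.not_gt]
    · simp [sq]
    · simp [h, h.ne', h.not_gt, mul_comm]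
  have swap : (∑ i ∈ s, ∑ j ∈ s, if j < i then x j * x i else 0) =
      ∑ i ∈ s, ∑ j ∈ s, if i < j then x i * x j else 0 := sum_comm
  rw [sq, sum_mul_sum, sum_congr rfl fun i _ => sum_congr rfl fun j _ => split i j]
  simp only [sum_add_distrib, sum_ite_eq, swap]
  simp [two_mul, add_assoc]

theorem Finset.sum_sq_le_mul_sum {ι R : Type*} [Semiring R] [PartialOrder R] [IsOrderedRing R]
    {s : Finset ι} {x : ι → R} {M : R}
    (h0 : ∀ i ∈ s, 0 ≤ x i) (hM : ∀ i ∈ s, x i ≤ M) :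
    ∑ i ∈ s, x i ^ 2 ≤ M * ∑ i ∈ s, x i := by
  rw [mul_sum]
  exact sum_le_sum fun i hi => by
    rw [sq]; exact mul_le_mul_of_nonneg_right (hM i hi) (h0 i hi)

/-- For positive reals `x₀ ≤ ⋯ ≤ x_{n}` (at least two of them),
with `b₁ = ∑ xᵢ` and `b₂ = ∑_{i<j} xᵢ xⱼ`, the largest one satisfies
`b₁ - 2 b₂ / b₁ ≤ x_max < √(b₁² - 2 b₂)`. -/
theorem stmt1 (n : ℕ) (hn : 1 ≤ n) (x : Fin (n + 1) → ℝ) (hmono : Monotone x)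
    (hpos : ∀ i, 0 < x i)
    (b1 b2 : ℝ) (hb1 : b1 = ∑ i : Fin (n + 1), x i)
    (hb2 : b2 = ∑ i : Fin (n + 1), ∑ j : Fin (n + 1),
      if i < j then x i * x j else 0) :
    b1 - 2 * b2 / b1 ≤ x (Fin.last n) ∧
    x (Fin.last n) < Real.sqrt (b1 ^ 2 - 2 * b2) := by
  have hb1_pos : 0 < b1 := hb1 ▸ sum_pos (fun i _ => hpos i) univ_nonempty
  have hsq : b1 ^ 2 - 2 * b2 = ∑ i, x i ^ 2 := by
    rw [hb1, hb2, sq_sum_eq_sum_sq_add_two_mul_sum_lt]; ring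
  constructor
  · have hle : b1 ^ 2 - 2 * b2 ≤ x (Fin.last n) * b1 := by
      rw [hsq, hb1]
      exact sum_sq_le_mul_sum (fun i _ => (hpos i).le) (fun i _ => hmono (Fin.le_last i))
    have hdiv : b1 - 2 * b2 / b1 = (b1 ^ 2 - 2 * b2) / b1 := by field_simp
    rwa [hdiv, div_le_iff₀ hb1_pos]
  · have h0 : (0 : Fin (n + 1)) ≠ Fin.last n := by
      rw [Ne, Fin.ext_iff, Fin.val_zero, Fin.val_last]; omega
    rw [Real.lt_sqrt (hpos _).le, hsq]
    exact single_lt_sum h0 (mem_univ _) (mem_univ _) (pow_pos (hpos 0) 2)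
      fun k _ _ => sq_nonneg (x k)
end

section
/- With $Q_n$ defined by the recurrence $Q_{-1}=0$, $Q_0=1$, $Q_{n+1}(x) = (x - d_n)Q_n(x) - \lambda_n^2 Q_{n-1}(x)$ where $d_0 = 1+\alpha$, $d_n = 2 + \alpha/(n+1)$ ($n \ge 1$), $\lambda_n^2 = 1 + \alpha/n$ ($n \ge 1$), the coefficient $a_{1,n}$ of $x^1$ in $Q_n$ satisfies $a_{1,n} = -\frac{n(n+1)}{2(\alpha+1)} a_{0,n}$ for all $n \ge 0$, where $a_{0,n} = (-1)^n \prod_{k=1}^n (1 + \alpha/k)$. -/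
open Polynomial Finset

/-!
Comparing coefficients of `x⁰` and `x¹` in the recurrence, the constant coefficients of `Qₙ`
obey the recurrence evaluated at `x = 0`, and the linear coefficients the same recurrence with
the constant coefficient `a_{0,n}` as inhomogeneous term. Since
`a_{0,n+1} = -(1 + α/(n+1)) a_{0,n}`, checking that the closed forms obey these recurrences
reduces to rational identities in `n` and `α`; a two-step induction on the pair
`(a_{0,n}, a_{1,n})` concludes.
-/

section ThreeTermRecurrence

variable {R : Type*} [CommRing R] (a b : R) (p q : R[X])

theorem coeff_zero_X_sub_C_mul_sub_C_mul :
    ((X - C a) * p - C b * q).coeff 0 = -a * p.coeff 0 - b * q.coeff 0 := by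
  simp [sub_mul, mul_coeff_zero]

theorem coeff_one_X_sub_C_mul_sub_C_mul :
    ((X - C a) * p - C b * q).coeff 1 = p.coeff 0 - a * p.coeff 1 - b * q.coeff 1 := by
  simp [sub_mul, coeff_X_mul]

end ThreeTermRecurrence

section ClosedForms

variable (α : ℝ)

noncomputable def coeffZeroSeq (n : ℕ) : ℝ :=
  (-1) ^ n * ∏ k ∈ Icc 1 n, (1 + α / k)

noncomputable def coeffOneSeq (n : ℕ) : ℝ :=
  -(n * (n + 1) / (2 * (α + 1))) * coeffZeroSeq α n

theorem coeffZeroSeq_zero : coeffZeroSeq α 0 = 1 := by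
  simp [coeffZeroSeq]

theorem coeffZeroSeq_succ (n : ℕ) :
    coeffZeroSeq α (n + 1) = -(1 + α / (n + 1)) * coeffZeroSeq α n := by
  rw [coeffZeroSeq, prod_Icc_succ_top (Nat.le_add_left 1 n), coeffZeroSeq]
  push_cast
  ring

theorem coeffZeroSeq_add_two (n : ℕ) :
    coeffZeroSeq α (n + 2) =
      -(2 + α / (n + 2)) * coeffZeroSeq α (n + 1) - (1 + α / (n + 1)) * coeffZeroSeq α n := by
  rw [coeffZeroSeq_succ α (n + 1), coeffZeroSeq_succ α n]
  push_cast
  ring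

theorem coeffOneSeq_one (hα : α + 1 ≠ 0) : coeffOneSeq α 1 = 1 := by
  simp only [coeffOneSeq, coeffZeroSeq_succ, coeffZeroSeq_zero]
  field_simp
  ring

theorem coeffOneSeq_add_two (hα : α + 1 ≠ 0) (n : ℕ) :
    coeffOneSeq α (n + 2) =
      coeffZeroSeq α (n + 1) - (2 + α / (n + 2)) * coeffOneSeq α (n + 1)
        - (1 + α / (n + 1)) * coeffOneSeq α n := by
  simp only [coeffOneSeq, coeffZeroSeq_succ α (n + 1), coeffZeroSeq_succ α n]
  push_cast
  field_simp
  ring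

end ClosedForms

/-- With `Qₙ` defined by the three-term recurrence, the coefficient
of `x¹` in `Qₙ` satisfies `a_{1,n} = -(n(n+1)/(2(α+1))) a_{0,n}`, where
`a_{0,n} = (-1)ⁿ ∏_{k=1}^n (1 + α/k)`. -/
theorem stmt6 (α : ℝ) (hα : -1 < α) (Q : ℕ → Polynomial ℝ)
    (hQ0 : Q 0 = 1) (hQ1 : Q 1 = X - C (1 + α))
    (hrec : ∀ n : ℕ, 1 ≤ n →
      Q (n + 1) = (X - C (2 + α / (n + 1))) * Q n - C (1 + α / n) * Q (n - 1)) :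
    ∀ n : ℕ, (Q n).coeff 1 =
      -(n * (n + 1) / (2 * (α + 1))) *
        ((-1) ^ n * ∏ k ∈ Finset.Icc 1 n, (1 + α / k)) := by
  have hα1 : α + 1 ≠ 0 := by linarith
  have hrec₂ (n : ℕ) : Q (n + 2) =
      (X - C (2 + α / (n + 2))) * Q (n + 1) - C (1 + α / (n + 1)) * Q n := by
    rw [show (n : ℝ) + 2 = n + 1 + 1 by ring]
    exact_mod_cast hrec (n + 1) (by omega)
  have hcoeffs : ∀ n, (Q n).coeff 0 = coeffZeroSeq α n ∧ (Q n).coeff 1 = coeffOneSeq α n := by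
    refine Nat.twoStepInduction ?_ ?_ fun n ih ih₁ => ?_
    · simp [hQ0, coeff_one, coeffZeroSeq_zero, coeffOneSeq]
    · simp [hQ1, coeff_one, coeffZeroSeq_succ, coeffZeroSeq_zero, coeffOneSeq_one α hα1]
    · rw [hrec₂, coeff_zero_X_sub_C_mul_sub_C_mul, coeff_one_X_sub_C_mul_sub_C_mul,
        coeffZeroSeq_add_two, coeffOneSeq_add_two α hα1, ih.1, ih.2, ih₁.1, ih₁.2]
      exact ⟨rfl, rfl⟩
  exact fun n => (hcoeffs n).2
end

section
/- With $Q_n$ as in the recurrence $Q_{-1}=0$, $Q_0=1$, $Q_{n+1}(x)=(x-d_n)Q_n(x)-\lambda_n^2 Q_{n-1}(x)$, $d_0=1+\alpha$, $d_n = 2+\alpha/(n+1)$, $\lambda_n^2 = 1+\alpha/n$, the coefficient of $x^2$ in $Q_n$ satisfies $a_{2,n} = \frac{(n-1)n(n+1)}{24(\alpha+1)(\alpha+2)(\alpha+3)}\,[3(\alpha+2)n + 2(\alpha+6)]\; a_{0,n}$ for all $n \ge 0$, where $a_{0,n} = (-1)^n \prod_{k=1}^n(1+\alpha/k)$. -/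
open Polynomial Finset

/-!
Comparing the coefficients of `x⁰`, `x¹`, `x²` on both sides of the recurrence gives, for each
`k`, a three-term recurrence for `a_{k,n}` driven by `a_{k-1,n}`. So `a_{0,n}`, then
`a_{1,n} = -n(n+1)/(2(α+1)) · a_{0,n}`, then the claimed `a_{2,n}` follow in turn by two-step
induction on `n`, each step being a rational-function identity in `n` and `α`.
-/

/-- The recurrence with `n` replaced by `n + 1`, which avoids the truncated `n - 1`. -/
def SatisfiesRecurrence (α : ℝ) (Q : ℕ → ℝ[X]) : Prop :=
  Q 0 = 1 ∧ Q 1 = X - C (1 + α) ∧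
    ∀ n : ℕ, Q (n + 2) = (X - C (2 + α / (n + 2))) * Q (n + 1) - C (1 + α / (n + 1)) * Q n

noncomputable def zerothCoeff (α : ℝ) (n : ℕ) : ℝ :=
  (-1) ^ n * ∏ k ∈ Icc 1 n, (1 + α / k)

noncomputable def firstCoeffRatio (α : ℝ) (n : ℕ) : ℝ :=
  -((n : ℝ) * (n + 1)) / (2 * (α + 1))

noncomputable def secondCoeffRatio (α : ℝ) (n : ℕ) : ℝ :=
  ((n - 1) * n * (n + 1) / (24 * (α + 1) * (α + 2) * (α + 3))) * (3 * (α + 2) * n + 2 * (α + 6))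

lemma zerothCoeff_succ (α : ℝ) (n : ℕ) :
    zerothCoeff α (n + 1) = -(1 + α / (n + 1)) * zerothCoeff α n := by
  rw [zerothCoeff, zerothCoeff, prod_Icc_succ_top (Nat.le_add_left 1 n)]
  push_cast
  ring

namespace SatisfiesRecurrence

variable {α : ℝ} {Q : ℕ → ℝ[X]}

lemma coeff_zero_add_two (hQ : SatisfiesRecurrence α Q) (n : ℕ) :
    (Q (n + 2)).coeff 0 =
      -(2 + α / (n + 2)) * (Q (n + 1)).coeff 0 - (1 + α / (n + 1)) * (Q n).coeff 0 := by
  rw [hQ.2.2, coeff_sub, mul_coeff_zero, coeff_C_mul]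
  simp

lemma coeff_succ_add_two (hQ : SatisfiesRecurrence α Q) (n k : ℕ) :
    (Q (n + 2)).coeff (k + 1) = (Q (n + 1)).coeff k -
      (2 + α / (n + 2)) * (Q (n + 1)).coeff (k + 1) - (1 + α / (n + 1)) * (Q n).coeff (k + 1) := by
  rw [hQ.2.2, coeff_sub, coeff_X_sub_C_mul, coeff_C_mul]

lemma coeff_zero_eq (hQ : SatisfiesRecurrence α Q) (n : ℕ) :
    (Q n).coeff 0 = zerothCoeff α n := by
  induction n using Nat.twoStepInduction with
  | zero => simp [hQ.1, zerothCoeff]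
  | one => simp [hQ.2.1, zerothCoeff]
  | more n ih₀ ih₁ =>
    rw [hQ.coeff_zero_add_two, ih₀, ih₁, zerothCoeff_succ α (n + 1), zerothCoeff_succ α n]
    push_cast
    ring

lemma coeff_one_eq (hQ : SatisfiesRecurrence α Q) (hα₁ : α + 1 ≠ 0) (n : ℕ) :
    (Q n).coeff 1 = firstCoeffRatio α n * zerothCoeff α n := by
  induction n using Nat.twoStepInduction with
  | zero => simp [hQ.1, coeff_one, firstCoeffRatio]
  | one =>
    rw [hQ.2.1, coeff_sub, coeff_X_one, coeff_C_of_ne_zero one_ne_zero, firstCoeffRatio,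
      zerothCoeff_succ, zerothCoeff]
    norm_num
    field_simp
    ring
  | more n ih₀ ih₁ =>
    rw [hQ.coeff_succ_add_two, ih₀, ih₁, hQ.coeff_zero_eq, zerothCoeff_succ α (n + 1),
      zerothCoeff_succ α n]
    simp only [firstCoeffRatio]
    push_cast
    field_simp
    ring

lemma coeff_two_eq (hQ : SatisfiesRecurrence α Q) (hα₁ : α + 1 ≠ 0) (hα₂ : α + 2 ≠ 0)
    (hα₃ : α + 3 ≠ 0) (n : ℕ) :
    (Q n).coeff 2 = secondCoeffRatio α n * zerothCoeff α n := by
  induction n using Nat.twoStepInduction with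
  | zero => simp [hQ.1, coeff_one, secondCoeffRatio]
  | one => simp [hQ.2.1, coeff_one, coeff_X, secondCoeffRatio]
  | more n ih₀ ih₁ =>
    rw [hQ.coeff_succ_add_two, ih₀, ih₁, hQ.coeff_one_eq hα₁, zerothCoeff_succ α (n + 1),
      zerothCoeff_succ α n]
    simp only [firstCoeffRatio, secondCoeffRatio]
    push_cast
    field_simp
    ring

end SatisfiesRecurrence

/-- With `Qₙ` defined by the three-term recurrence, the coefficient
of `x²` in `Qₙ` satisfies
`a_{2,n} = ((n-1)n(n+1)/(24(α+1)(α+2)(α+3))) [3(α+2)n + 2(α+6)] a_{0,n}`,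
where `a_{0,n} = (-1)ⁿ ∏_{k=1}^n (1 + α/k)`. -/
theorem stmt7 (α : ℝ) (hα : -1 < α) (Q : ℕ → Polynomial ℝ)
    (hQ0 : Q 0 = 1) (hQ1 : Q 1 = X - C (1 + α))
    (hrec : ∀ n : ℕ, 1 ≤ n →
      Q (n + 1) = (X - C (2 + α / (n + 1))) * Q n - C (1 + α / n) * Q (n - 1)) :
    ∀ n : ℕ, (Q n).coeff 2 =
      ((n - 1) * n * (n + 1) / (24 * (α + 1) * (α + 2) * (α + 3))) *
        (3 * (α + 2) * n + 2 * (α + 6)) *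
        ((-1) ^ n * ∏ k ∈ Finset.Icc 1 n, (1 + α / k)) := by
  have hQ : SatisfiesRecurrence α Q := ⟨hQ0, hQ1, fun n => by
    simpa [add_assoc, one_add_one_eq_two] using hrec (n + 1) (Nat.le_add_left 1 n)⟩
  intro n
  exact hQ.coeff_two_eq (by linarith) (by linarith) (by linarith) n
end

section
/- With $Q_n$ as in the recurrence $Q_{-1}=0$, $Q_0=1$, $Q_{n+1}(x)=(x-d_n)Q_n(x)-\lambda_n^2 Q_{n-1}(x)$, $d_0=1+\alpha$, $d_n=2+\alpha/(n+1)$, $\lambda_n^2=1+\alpha/n$, the coefficient of $x^3$ in $Q_n$ satisfies $a_{3,n} = \frac{-(n-2)(n-1)n(n+1)\,[5(\alpha+2)(\alpha+4)n(n+1) + 8(7\alpha+20)n + 12(\alpha+20)]}{240(\alpha+1)(\alpha+2)(\alpha+3)(\alpha+4)(\alpha+5)}\; a_{0,n}$ for all $n \ge 0$, where $a_{0,n} = (-1)^n \prod_{k=1}^n(1+\alpha/k)$. -/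
/-!
Comparing coefficients of `x^k` in the recurrence expresses `a_{k,n+2}` through `a_{k-1,n+1}`,
`a_{k,n+1}` and `a_{k,n}`. Hence the closed forms of `a_{k,n} / a_{0,n}` for `k = 0, 1, 2, 3` can
be verified in turn by two-step induction on `n`, using `a_{0,n+1} = -(1 + α/(n+1)) a_{0,n}`;
each step is an identity of rational functions in `n` and `α`.
-/

open Polynomial Finset

theorem Polynomial.coeff_X_sub_C_mul_sub_C_mul_zero {R : Type*} [CommRing R]
    (p q : R[X]) (d l : R) :
    ((X - C d) * p - C l * q).coeff 0 = -(d * p.coeff 0) - l * q.coeff 0 := by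
  simp [sub_mul, mul_coeff_zero]

theorem Polynomial.coeff_X_sub_C_mul_sub_C_mul_succ {R : Type*} [CommRing R]
    (p q : R[X]) (d l : R) (k : ℕ) :
    ((X - C d) * p - C l * q).coeff (k + 1) =
      p.coeff k - d * p.coeff (k + 1) - l * q.coeff (k + 1) := by
  simp [sub_mul, coeff_X_mul]

/-- The paper's `Q_n`, with `d_n = 2 + α / (n + 1)` (`d_0 = 1 + α`) and `λ_n² = 1 + α / n`. -/
structure IsQSeq (α : ℝ) (Q : ℕ → ℝ[X]) : Prop where
  zero : Q 0 = 1
  one : Q 1 = X - C (1 + α)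
  succ_succ : ∀ n : ℕ,
    Q (n + 2) = (X - C (2 + α / (n + 2))) * Q (n + 1) - C (1 + α / (n + 1)) * Q n

noncomputable def a0 (α : ℝ) (n : ℕ) : ℝ := (-1) ^ n * ∏ k ∈ Icc 1 n, (1 + α / k)

theorem a0_zero (α : ℝ) : a0 α 0 = 1 := by simp [a0]

theorem a0_one (α : ℝ) : a0 α 1 = -(1 + α) := by simp [a0]

theorem a0_succ (α : ℝ) (n : ℕ) : a0 α (n + 1) = -(1 + α / (n + 1)) * a0 α n := by
  rw [a0, a0, prod_Icc_succ_top (by omega : 1 ≤ n + 1)]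
  push_cast
  ring

namespace IsQSeq

variable {α : ℝ} {Q : ℕ → ℝ[X]}

theorem coeff_zero_succ_succ (hQ : IsQSeq α Q) (n : ℕ) :
    (Q (n + 2)).coeff 0 =
      -((2 + α / (n + 2)) * (Q (n + 1)).coeff 0) - (1 + α / (n + 1)) * (Q n).coeff 0 := by
  rw [hQ.succ_succ, coeff_X_sub_C_mul_sub_C_mul_zero]

theorem coeff_succ_succ_succ (hQ : IsQSeq α Q) (n k : ℕ) :
    (Q (n + 2)).coeff (k + 1) = (Q (n + 1)).coeff k - (2 + α / (n + 2)) * (Q (n + 1)).coeff (k + 1)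
      - (1 + α / (n + 1)) * (Q n).coeff (k + 1) := by
  rw [hQ.succ_succ, coeff_X_sub_C_mul_sub_C_mul_succ]

theorem coeff_zero_eq (hQ : IsQSeq α Q) (n : ℕ) : (Q n).coeff 0 = a0 α n := by
  induction n using Nat.twoStepInduction with
  | zero => simp [hQ.zero, a0_zero]
  | one => simp [hQ.one, a0_one]
  | more n ih₀ ih₁ =>
    rw [hQ.coeff_zero_succ_succ, ih₀, ih₁, a0_succ α (n + 1), a0_succ α n]
    push_cast
    ring

theorem coeff_one_eq (hQ : IsQSeq α Q) (hα : α + 1 ≠ 0) (n : ℕ) :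
    (Q n).coeff 1 = -(n * (n + 1)) / (2 * (α + 1)) * a0 α n := by
  induction n using Nat.twoStepInduction with
  | zero => simp [hQ.zero, coeff_one]
  | one =>
    simp [hQ.one, a0_one, coeff_X, coeff_one]
    field_simp
    ring
  | more n ih₀ ih₁ =>
    rw [hQ.coeff_succ_succ_succ, ih₀, ih₁, hQ.coeff_zero_eq, a0_succ α (n + 1), a0_succ α n]
    push_cast
    field_simp
    ring

theorem coeff_two_eq (hQ : IsQSeq α Q) (hα₁ : α + 1 ≠ 0) (hα₂ : α + 2 ≠ 0) (hα₃ : α + 3 ≠ 0)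
    (n : ℕ) :
    (Q n).coeff 2 = n * (n - 1) * (n + 1) * (3 * (α + 2) * n + 2 * (α + 6)) /
        (24 * (α + 1) * (α + 2) * (α + 3)) * a0 α n := by
  induction n using Nat.twoStepInduction with
  | zero => simp [hQ.zero, coeff_one]
  | one => simp [hQ.one, coeff_X, coeff_one]
  | more n ih₀ ih₁ =>
    rw [hQ.coeff_succ_succ_succ, ih₀, ih₁, hQ.coeff_one_eq hα₁, a0_succ α (n + 1), a0_succ α n]
    push_cast
    field_simp
    ring

theorem coeff_three_eq (hQ : IsQSeq α Q) (hα : -1 < α) (n : ℕ) :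
    (Q n).coeff 3 =
      -((n - 2) * (n - 1) * n * (n + 1) *
          (5 * (α + 2) * (α + 4) * n * (n + 1) + 8 * (7 * α + 20) * n + 12 * (α + 20))) /
        (240 * (α + 1) * (α + 2) * (α + 3) * (α + 4) * (α + 5)) * a0 α n := by
  have hα₁ : α + 1 ≠ 0 := by linarith
  have hα₂ : α + 2 ≠ 0 := by linarith
  have hα₃ : α + 3 ≠ 0 := by linarith
  have hα₄ : α + 4 ≠ 0 := by linarith
  have hα₅ : α + 5 ≠ 0 := by linarith
  induction n using Nat.twoStepInduction with
  | zero => simp [hQ.zero, coeff_one]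
  | one => simp [hQ.one, coeff_X, coeff_one]
  | more n ih₀ ih₁ =>
    rw [hQ.coeff_succ_succ_succ, ih₀, ih₁, hQ.coeff_two_eq hα₁ hα₂ hα₃, a0_succ α (n + 1),
      a0_succ α n]
    push_cast
    field_simp
    ring

end IsQSeq

/-- With `Qₙ` defined by the three-term recurrence, the coefficient
of `x³` in `Qₙ` satisfies
`a_{3,n} = -((n-2)(n-1)n(n+1)[5(α+2)(α+4)n(n+1) + 8(7α+20)n + 12(α+20)])
           / (240(α+1)(α+2)(α+3)(α+4)(α+5)) ⋅ a_{0,n}`,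
where `a_{0,n} = (-1)ⁿ ∏_{k=1}^n (1 + α/k)`. -/
theorem stmt8 (α : ℝ) (hα : -1 < α) (Q : ℕ → Polynomial ℝ)
    (hQ0 : Q 0 = 1) (hQ1 : Q 1 = X - C (1 + α))
    (hrec : ∀ n : ℕ, 1 ≤ n →
      Q (n + 1) = (X - C (2 + α / (n + 1))) * Q n - C (1 + α / n) * Q (n - 1)) :
    ∀ n : ℕ, (Q n).coeff 3 =
      (-((n - 2) * (n - 1) * n * (n + 1) *
          (5 * (α + 2) * (α + 4) * n * (n + 1) + 8 * (7 * α + 20) * n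
            + 12 * (α + 20))) /
        (240 * (α + 1) * (α + 2) * (α + 3) * (α + 4) * (α + 5))) *
        ((-1) ^ n * ∏ k ∈ Finset.Icc 1 n, (1 + α / k)) := by
  have hQ : IsQSeq α Q := by
    refine ⟨hQ0, hQ1, fun n => ?_⟩
    have h := hrec (n + 1) (by omega)
    push_cast at h
    simpa only [add_assoc, one_add_one_eq_two] using h
  exact hQ.coeff_three_eq hα
end

section
/- For all real $\alpha > -1$ and all integers $n \ge 2$, one has $\sum_{j=0}^5 \nu_j(\alpha) n^j > 0$, where $\nu_0(\alpha)=\tfrac{8}{125}(1+\alpha)^2(2+\alpha)(4+\alpha)$, $\nu_1(\alpha)=\tfrac{3}{250}(1+\alpha)(16\alpha^3+152\alpha^2+439\alpha-52)$, $\nu_2(\alpha)=\tfrac{1}{500}(96\alpha^4+1363\alpha^3+5656\alpha^2+9167\alpha+2828)$, $\nu_3(\alpha)=\tfrac{1}{250}(16\alpha^4+363\alpha^3+2506\alpha^2+7167\alpha+4708)$, $\nu_4(\alpha)=\tfrac{1}{100}(23\alpha^3+446\alpha^2+1657\alpha+2164)$, $\nu_5(\alpha)=\tfrac{3}{5}(5\alpha+16)$.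 -/
/-! Substituting `α = a - 1` and `n = x + 2` turns the sum into a polynomial in `a > 0` and
`x ≥ 0` all of whose coefficients are nonnegative and whose constant term is positive. -/

noncomputable def shiftedPoly (a x : ℝ) : ℝ :=
  (1674 / 5 + 3978 / 5 * x + 7401 / 10 * x ^ 2 + 1686 / 5 * x ^ 3 + 753 / 10 * x ^ 4
      + 33 / 5 * x ^ 5)
    + a * (8379 / 25 + 33387 / 50 * x + 2598 / 5 * x ^ 2 + 4986 / 25 * x ^ 3
      + 1917 / 50 * x ^ 4 + 3 * x ^ 5)
    + a ^ 2 * (16308 / 125 + 53151 / 250 * x + 65539 / 500 * x ^ 2 + 9053 / 250 * x ^ 3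
      + 377 / 100 * x ^ 4)
    + a ^ 3 * (2979 / 125 + 3849 / 125 * x + 7327 / 500 * x ^ 2 + 759 / 250 * x ^ 3
      + 23 / 100 * x ^ 4)
    + a ^ 4 * (8 / 125 * (x + 3) ^ 3)

theorem shiftedPoly_pos {a x : ℝ} (ha : 0 ≤ a) (hx : 0 ≤ x) : 0 < shiftedPoly a x := by
  unfold shiftedPoly
  positivity

/-- For all real `α > -1` and all integers `n ≥ 2`,
`∑_{j=0}^5 νⱼ(α) nʲ > 0` for the listed polynomials `νⱼ`. -/
theorem stmt12 (α : ℝ) (hα : -1 < α) (n : ℕ) (hn : 2 ≤ n)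
    (ν : ℕ → ℝ)
    (hν0 : ν 0 = (8 / 125) * (1 + α) ^ 2 * (2 + α) * (4 + α))
    (hν1 : ν 1 = (3 / 250) * (1 + α) *
      (16 * α ^ 3 + 152 * α ^ 2 + 439 * α - 52))
    (hν2 : ν 2 = (1 / 500) *
      (96 * α ^ 4 + 1363 * α ^ 3 + 5656 * α ^ 2 + 9167 * α + 2828))
    (hν3 : ν 3 = (1 / 250) *
      (16 * α ^ 4 + 363 * α ^ 3 + 2506 * α ^ 2 + 7167 * α + 4708))
    (hν4 : ν 4 = (1 / 100) * (23 * α ^ 3 + 446 * α ^ 2 + 1657 * α + 2164))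
    (hν5 : ν 5 = (3 / 5) * (5 * α + 16)) :
    0 < ∑ j ∈ Finset.range 6, ν j * (n : ℝ) ^ j := by
  have hn' : (2 : ℝ) ≤ n := by exact_mod_cast hn
  have hsum : ∑ j ∈ Finset.range 6, ν j * (n : ℝ) ^ j = shiftedPoly (1 + α) (n - 2) := by
    simp only [Finset.sum_range_succ, Finset.sum_range_zero, hν0, hν1, hν2, hν3, hν4, hν5,
      shiftedPoly]
    ring
  rw [hsum]
  exact shiftedPoly_pos (by linarith) (by linarith)
end

section
/- For real $\alpha > -1$, let $Q_2(x) = (x - d_1)(x - d_0) - \lambda_1^2$ with $d_0 = 1+\alpha$, $d_1 = 2 + \alpha/2$, $\lambda_1^2 = 1 + \alpha$; then the two roots of $Q_2$ are real and positive, and the smaller root $x_{\min}$ satisfies $1/x_{\min} = \frac{3(\alpha+2) + \sqrt{(\alpha+2)(\alpha+10)}}{2(\alpha+1)(\alpha+2)}$. -/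
/-- For `α > -1`, the quadratic
`Q₂(x) = (x - (2 + α/2))(x - (1 + α)) - (1 + α)` has two real positive roots
`r ≤ s`, and the reciprocal of the smaller root equals
`(3(α+2) + √((α+2)(α+10))) / (2(α+1)(α+2))`  (this value is `[c₂(α)]²`). -/
theorem stmt16 (α : ℝ) (hα : -1 < α) :
    ∃ r s : ℝ, 0 < r ∧ r ≤ s ∧
      (∀ x : ℝ, (x - (2 + α / 2)) * (x - (1 + α)) - (1 + α) = 0 ↔
        x = r ∨ x = s) ∧
      1 / r = (3 * (α + 2) + Real.sqrt ((α + 2) * (α + 10))) /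
        (2 * (α + 1) * (α + 2)) := by
  set w := Real.sqrt ((α + 2) * (α + 10)) with hwdef
  have hα2 : (0:ℝ) < α + 2 := by linarith
  have hnn : (0:ℝ) ≤ (α + 2) * (α + 10) := by nlinarith
  have hw0 : 0 ≤ w := Real.sqrt_nonneg _
  have hw2 : w ^ 2 = (α + 2) * (α + 10) := Real.sq_sqrt hnn
  have hwlt : w < 3 * (α + 2) := by
    nlinarith [hw2, hw0]
  refine ⟨(3 * (α + 2) - w) / 4, (3 * (α + 2) + w) / 4, by linarith, by linarith, ?_, ?_⟩
  · intro x
    constructor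
    · intro hx
      have : (x - (3 * (α + 2) - w) / 4) * (x - (3 * (α + 2) + w) / 4) = 0 := by
        nlinarith [hw2]
      rcases mul_eq_zero.mp this with h | h
      · left; linarith
      · right; linarith
    · rintro (rfl | rfl) <;> nlinarith [hw2]
  · have hr : (0:ℝ) < (3 * (α + 2) - w) / 4 := by linarith
    have h1 : (0:ℝ) < α + 1 := by linarith
    rw [div_eq_div_iff (by linarith) (by positivity)]
    nlinarith [hw2]
end

section
/- For the Hermite weight $w_H(t) = e^{-t^2}$ on $\mathbb{R}$, every polynomial $p$ of degree at most $n$ satisfies $\int_{\mathbb{R}} e^{-t^2} |p'(t)|^2\, dt \le 2n \int_{\mathbb{R}} e^{-t^2} |p(t)|^2\, dt$, and equality is attained for $p = H_n$, the $n$-th Hermite polynomial. -/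
/-!
Write `⟪p, q⟫ = ∫ e^{-t²} p q`. Since `(e^{-t²})' = -2t e^{-t²}`, integration by parts together with
`H_{n+1} = 2x Hₙ - Hₙ'` gives `⟪H_{n+1}, q⟫ = ⟪Hₙ, q'⟫`. Hence `H_m` is orthogonal to every
polynomial of lower degree, and `‖H_{n+1}‖² = 2(n+1) ‖Hₙ‖²` because `H_{n+1}' = 2(n+1) Hₙ`.
For `deg p ≤ n + 1` write `p = c H_{n+1} + r` with `deg r ≤ n`; Pythagoras on `p` and on
`p' = 2(n+1) c Hₙ + r'` yields `‖p'‖² = 2(n+1) (‖p‖² - ‖r‖²) + ‖r'‖²`, so the inequality follows by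
induction on `n`, with equality when `r = 0`.
-/

open Polynomial MeasureTheory

/-- The physicists' Hermite polynomials: `H₀ = 1`, `H₁ = 2x`,
`H_{n+1} = 2x Hₙ - 2n H_{n-1}`. -/
noncomputable def physHermite : ℕ → Polynomial ℝ
  | 0 => 1
  | 1 => 2 * X
  | (n + 2) => 2 * X * physHermite (n + 1) - C (2 * (n + 1) : ℝ) * physHermite n

open Filter Asymptotics Real

lemma physHermite_succ_succ (n : ℕ) :
    physHermite (n + 2) = 2 * X * physHermite (n + 1) - C (2 * (n + 1) : ℝ) * physHermite n :=
  rfl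

lemma derivative_physHermite_succ :
    ∀ n : ℕ, derivative (physHermite (n + 1)) = C (2 * (n + 1) : ℝ) * physHermite n
  | 0 => by simp [physHermite, map_ofNat]
  | 1 => by
    simp [physHermite, map_ofNat]
    ring
  | n + 2 => by
    rw [physHermite_succ_succ (n + 1), derivative_sub, derivative_mul, derivative_mul,
      derivative_C_mul, derivative_physHermite_succ (n + 1), derivative_physHermite_succ n,
      physHermite_succ_succ n]
    simp only [derivative_X, derivative_ofNat, map_mul, map_add, map_ofNat, map_natCast, map_one]
    push_cast
    ring

lemma physHermite_succ (n : ℕ) :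
    physHermite (n + 1) = 2 * X * physHermite n - derivative (physHermite n) := by
  cases n with
  | zero => simp [physHermite]
  | succ n => rw [physHermite_succ_succ, derivative_physHermite_succ]

lemma natDegree_physHermite_le (n : ℕ) : (physHermite n).natDegree ≤ n := by
  induction n with
  | zero => simp [physHermite]
  | succ n ih =>
    rw [physHermite_succ]
    have h2X : (2 * X : ℝ[X]).natDegree ≤ 1 := by compute_degree
    refine (natDegree_sub_le _ _).trans (max_le ?_ ((natDegree_derivative_le _).trans (by omega)))
    exact natDegree_mul_le.trans (by omega)

lemma coeff_physHermite_self (n : ℕ) : (physHermite n).coeff n = 2 ^ n := by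
  induction n with
  | zero => simp [physHermite]
  | succ n ih =>
    rw [physHermite_succ, coeff_sub, mul_assoc, coeff_ofNat_mul, coeff_X_mul, ih,
      coeff_eq_zero_of_natDegree_lt ((natDegree_derivative_le _).trans_lt
        ((Nat.sub_le _ _).trans_lt ((natDegree_physHermite_le n).trans_lt n.lt_succ_self)))]
    ring

lemma integrable_exp_neg_sq_mul_eval (p : ℝ[X]) :
    Integrable fun t : ℝ => exp (-t ^ 2) * p.eval t := by
  -- `e^{-t²} p(t) = (p(t) e^{-t²/2}) e^{-t²/2}`, and the first factor tends to `0` at infinity.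
  set g : ℝ → ℝ := fun t => exp (-(1 / 2) * t ^ 2)
  have hp : p.eval =O[cocompact ℝ] fun t => t ^ p.natDegree := by
    simpa [← Metric.cobounded_eq_cocompact] using
      isBigO_cobounded_of_degree_le (Q := (X : ℝ[X]) ^ p.natDegree)
        (by simp [degree_le_natDegree])
  have hdecay : (fun t : ℝ => t ^ p.natDegree * g t) =O[cocompact ℝ] fun _ => (1 : ℝ) := by
    refine IsBigO.of_norm_left ((tendsto_rpow_abs_mul_exp_neg_mul_sq_cocompact
      (by norm_num : (0 : ℝ) < 1 / 2) p.natDegree).isBigO_one ℝ |>.congr_left fun t => ?_)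
    simp [g, abs_of_pos (exp_pos _)]
  have hO := ((hp.mul (isBigO_refl g _)).trans hdecay).mul (isBigO_refl g _)
  have hcont : Continuous fun t : ℝ => exp (-t ^ 2) * p.eval t := by fun_prop
  refine hcont.locallyIntegrable.integrable_of_isBigO_cocompact
    (hO.congr (fun t => ?_) (fun t => one_mul _))
    ((integrable_exp_neg_mul_sq (by norm_num : (0 : ℝ) < 1 / 2)).integrableAtFilter _)
  rw [mul_right_comm, mul_assoc, ← exp_add]
  ring_nf

noncomputable def gaussIntegral : ℝ[X] →ₗ[ℝ] ℝ where
  toFun p := ∫ t : ℝ, exp (-t ^ 2) * p.eval t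
  map_add' p q := by
    simp_rw [eval_add, mul_add]
    exact integral_add (integrable_exp_neg_sq_mul_eval p) (integrable_exp_neg_sq_mul_eval q)
  map_smul' c p := by
    simp_rw [eval_smul, smul_eq_mul, mul_left_comm _ c]
    exact integral_const_mul c _

lemma gaussIntegral_apply (p : ℝ[X]) :
    gaussIntegral p = ∫ t : ℝ, exp (-t ^ 2) * p.eval t := rfl

lemma gaussIntegral_C_mul (c : ℝ) (p : ℝ[X]) : gaussIntegral (C c * p) = c * gaussIntegral p := by
  rw [C_mul', map_smul, smul_eq_mul]

lemma gaussIntegral_sq_nonneg (p : ℝ[X]) : 0 ≤ gaussIntegral (p ^ 2) :=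
  integral_nonneg fun t => by simp only [eval_pow]; positivity

lemma gaussIntegral_derivative (p : ℝ[X]) :
    gaussIntegral (derivative p) = gaussIntegral (2 * X * p) := by
  have hderiv (t : ℝ) : HasDerivAt (fun t => exp (-t ^ 2) * p.eval t)
      (exp (-t ^ 2) * (derivative p - 2 * X * p).eval t) t := by
    refine ((((hasDerivAt_id' t).pow 2).neg.exp).mul (p.hasDerivAt t)).congr_deriv ?_
    simp only [eval_sub, eval_mul, eval_ofNat, eval_X, Pi.neg_apply, Pi.pow_apply]
    ring
  rw [← sub_eq_zero, ← map_sub]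
  exact integral_eq_zero_of_hasDerivAt_of_integrable hderiv
    (integrable_exp_neg_sq_mul_eval _) (integrable_exp_neg_sq_mul_eval p)

lemma gaussIntegral_physHermite_succ_mul (n : ℕ) (q : ℝ[X]) :
    gaussIntegral (physHermite (n + 1) * q) = gaussIntegral (physHermite n * derivative q) := by
  have hparts := gaussIntegral_derivative (physHermite n * q)
  rw [derivative_mul, map_add, ← mul_assoc] at hparts
  rw [physHermite_succ, sub_mul, map_sub, ← hparts, add_sub_cancel_left]

lemma gaussIntegral_physHermite_mul_eq_zero {m : ℕ} {q : ℝ[X]} (hq : q.natDegree ≤ m)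
    (hqm : q.coeff m = 0) : gaussIntegral (physHermite m * q) = 0 := by
  induction m generalizing q with
  | zero => rw [eq_C_of_natDegree_le_zero hq, hqm, map_zero, mul_zero, map_zero]
  | succ m ih =>
    rw [gaussIntegral_physHermite_succ_mul]
    exact ih ((natDegree_derivative_le q).trans (by omega)) (by simp [coeff_derivative, hqm])

lemma gaussIntegral_physHermite_succ_sq (n : ℕ) :
    gaussIntegral (physHermite (n + 1) ^ 2) = 2 * (n + 1) * gaussIntegral (physHermite n ^ 2) := by
  rw [sq, gaussIntegral_physHermite_succ_mul, derivative_physHermite_succ, mul_left_comm,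
    gaussIntegral_C_mul, sq]

lemma gaussIntegral_sq_C_mul_physHermite_add (c : ℝ) {m : ℕ} {r : ℝ[X]} (hr : r.natDegree ≤ m)
    (hrm : r.coeff m = 0) :
    gaussIntegral ((C c * physHermite m + r) ^ 2) =
      c ^ 2 * gaussIntegral (physHermite m ^ 2) + gaussIntegral (r ^ 2) := by
  have hexpand : (C c * physHermite m + r) ^ 2 =
      C (c ^ 2) * physHermite m ^ 2 + C (2 * c) * (physHermite m * r) + r ^ 2 := by
    simp only [map_mul, map_pow, map_ofNat]
    ring
  rw [hexpand, map_add, map_add, gaussIntegral_C_mul, gaussIntegral_C_mul,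
    gaussIntegral_physHermite_mul_eq_zero hr hrm, mul_zero, add_zero]

lemma gaussIntegral_derivative_sq_C_mul_physHermite_add (c : ℝ) {n : ℕ} {r : ℝ[X]}
    (hr : r.natDegree ≤ n) :
    gaussIntegral (derivative (C c * physHermite (n + 1) + r) ^ 2) =
      2 * (n + 1) * (gaussIntegral ((C c * physHermite (n + 1) + r) ^ 2) - gaussIntegral (r ^ 2))
        + gaussIntegral (derivative r ^ 2) := by
  have hderiv : derivative (C c * physHermite (n + 1) + r) =
      C (c * (2 * (n + 1))) * physHermite n + derivative r := by
    rw [derivative_add, derivative_C_mul, derivative_physHermite_succ, ← mul_assoc, ← map_mul]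
  rw [hderiv, gaussIntegral_sq_C_mul_physHermite_add _ ((natDegree_derivative_le r).trans
      (by omega)) (by simp [coeff_derivative, coeff_eq_zero_of_natDegree_lt (hr.trans_lt
        n.lt_succ_self)]),
    gaussIntegral_sq_C_mul_physHermite_add _ (hr.trans n.le_succ)
      (coeff_eq_zero_of_natDegree_lt (hr.trans_lt n.lt_succ_self)),
    gaussIntegral_physHermite_succ_sq]
  ring

lemma exists_eq_C_mul_physHermite_add {n : ℕ} {p : ℝ[X]} (hp : p.natDegree ≤ n + 1) :
    ∃ c r, r.natDegree ≤ n ∧ p = C c * physHermite (n + 1) + r := by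
  set c := p.coeff (n + 1) / 2 ^ (n + 1)
  refine ⟨c, p - C c * physHermite (n + 1), ?_, by ring⟩
  refine natDegree_le_pred ((natDegree_sub_le _ _).trans (max_le hp ?_)) ?_
  · exact (natDegree_C_mul_le _ _).trans (natDegree_physHermite_le _)
  · rw [coeff_sub, coeff_C_mul, coeff_physHermite_self]
    exact sub_eq_zero.2 (div_mul_cancel₀ _ (by positivity)).symm

theorem gaussIntegral_derivative_sq_le {n : ℕ} {p : ℝ[X]} (hp : p.natDegree ≤ n) :
    gaussIntegral (derivative p ^ 2) ≤ 2 * n * gaussIntegral (p ^ 2) := by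
  induction n generalizing p with
  | zero =>
    rw [eq_C_of_natDegree_le_zero hp, derivative_C]
    simp
  | succ n ih =>
    obtain ⟨c, r, hr, rfl⟩ := exists_eq_C_mul_physHermite_add hp
    rw [gaussIntegral_derivative_sq_C_mul_physHermite_add c hr]
    push_cast
    linarith [ih hr, gaussIntegral_sq_nonneg r]

theorem gaussIntegral_derivative_physHermite_sq (n : ℕ) :
    gaussIntegral (derivative (physHermite n) ^ 2) =
      2 * n * gaussIntegral (physHermite n ^ 2) := by
  cases n with
  | zero => simp [physHermite]
  | succ n =>
    simpa using gaussIntegral_derivative_sq_C_mul_physHermite_add 1 (r := 0) (n := n) (by simp)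

/-- The sharp `L₂` Markov inequality for the Hermite weight
`e^{-t²}`: every polynomial `p` of degree at most `n` satisfies
`∫ e^{-t²} p'(t)² dt ≤ 2n ∫ e^{-t²} p(t)² dt`, with equality for the `n`-th
(physicists') Hermite polynomial. -/
theorem stmt18 (n : ℕ) :
    (∀ p : Polynomial ℝ, p.natDegree ≤ n →
      (∫ t : ℝ, Real.exp (-t ^ 2) * (p.derivative.eval t) ^ 2) ≤
        2 * n * ∫ t : ℝ, Real.exp (-t ^ 2) * (p.eval t) ^ 2) ∧
    (∫ t : ℝ, Real.exp (-t ^ 2) * ((physHermite n).derivative.eval t) ^ 2) =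
      2 * n * ∫ t : ℝ, Real.exp (-t ^ 2) * ((physHermite n).eval t) ^ 2 := by
  simp only [← eval_pow, ← gaussIntegral_apply]
  exact ⟨fun p hp => gaussIntegral_derivative_sq_le hp, gaussIntegral_derivative_physHermite_sq n⟩
end
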